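/- Let G be a d-degenerate graph admitting a d-degeneracy ordering composed of t consecutive independent sets, and let k ≥ d+2. Then any proper k-coloring of G can be transformed into any other by a parallel recoloring schedule of length at most k^{t+1}, where each parallel step recolors an independent set and all intermediate colorings are proper. -/

import Mathlib

/-!
Let `B` be the first layer: it is independent and its vertices have all their neighbours in later
layers, hence at most `d` of them. Recolour `G - B` (kept on the same vertex type as the spanning
subgraph `(G.induce Bᶜ).spanningCoe`, with the layers shifted down by one) recursively, by a
schedule in which every step moves vertices to a single colour `c`. Each such step is lifted to `G`
by first moving `B` to colours that avoid `c` and the colours of their neighbours (possible as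
`k ≥ d + 2`), one target colour at a time, in `k - 1` steps, and then performing the step. Finally
`B` is recoloured to its target one colour class at a time, in `k` steps. The lengths satisfy
`L (t + 1) = k L t + k`, so `L t + k ≤ k ^ (t + 1)`.
-/

open Set

namespace SimpleGraph

variable {V C : Type*} (G : SimpleGraph V)

def IsProperColoring (α : V → C) : Prop := ∀ ⦃u v⦄, G.Adj u v → α u ≠ α v

/-- Sending all recoloured vertices to a single colour is what makes a step liftable past a new
layer. -/
structure IsRecolorStep (α β : V → C) : Prop where
  proper : G.IsProperColoring β
  indepSet : G.IsIndepSet {x | β x ≠ α x}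
  mono : ∃ c, ∀ x, β x ≠ α x → β x = c

def recolorStep (C : Type*) : SetRel (V → C) (V → C) := {p | G.IsRecolorStep p.1 p.2}

variable {G}

lemma mem_recolorStep {α β : V → C} : (α, β) ∈ G.recolorStep C ↔ G.IsRecolorStep α β := Iff.rfl

lemma spanningCoe_induce_adj {s : Set V} {u v : V} :
    (G.induce s).spanningCoe.Adj u v ↔ G.Adj u v ∧ u ∈ s ∧ v ∈ s := by
  simp [map_adj]

lemma IsProperColoring.anti {H : SimpleGraph V} {α : V → C} (hHG : H ≤ G)
    (hα : G.IsProperColoring α) : H.IsProperColoring α :=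
  fun _ _ huv => hα (hHG huv)

lemma IsIndepSet.isProperColoring {B : Set V} {γ : V → C} (hB : G.IsIndepSet B)
    (h : ∀ ⦃u v⦄, G.Adj u v → v ∉ B → γ u ≠ γ v) : G.IsProperColoring γ := by
  intro u v huv
  by_cases hv : v ∈ B
  · have hu : u ∉ B := fun hu => hB hu hv (G.ne_of_adj huv) huv
    exact (h huv.symm hu).symm
  · exact h huv hv

lemma IsProperColoring.of_forall_eq_or_eq {α β γ : V → C} (hα : G.IsProperColoring α)
    (hβ : G.IsProperColoring β) (hαβ : G.IsIndepSet {v | α v ≠ β v})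
    (hγ : ∀ v, γ v = α v ∨ γ v = β v) : G.IsProperColoring γ := by
  refine hαβ.isProperColoring fun u v huv hv => ?_
  have hγv : γ v = α v := by
    rcases hγ v with h | h <;> simp_all
  rcases hγ u with h | h
  · rw [h, hγv]; exact hα huv
  · rw [h, hγv, not_not.1 hv]; exact hβ huv

lemma isProperColoring_apply_of_head {p : RelSeries (G.recolorStep C)}
    (hp : G.IsProperColoring p.head) (i : Fin (p.length + 1)) : G.IsProperColoring (p i) :=
  Fin.cases hp (fun i => (mem_recolorStep.1 (p.step i)).proper) i

lemma isProperColoring_last_of_head {p : RelSeries (G.recolorStep C)}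
    (hp : G.IsProperColoring p.head) : G.IsProperColoring p.last :=
  isProperColoring_apply_of_head hp _

lemma exists_ne_forall_adj_ne [Finite V] [Fintype C] {d : ℕ} (hC : d + 2 ≤ Fintype.card C)
    (β : V → C) (c : C) {v : V} (hv : (G.neighborSet v).ncard ≤ d) :
    ∃ x, x ≠ c ∧ ∀ w, G.Adj v w → β w ≠ x := by
  have hlt : (insert c (β '' G.neighborSet v)).ncard < (univ : Set C).ncard := by
    rw [ncard_univ, Nat.card_eq_fintype_card]
    calc _ ≤ (β '' G.neighborSet v).ncard + 1 := ncard_insert_le _ _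
      _ ≤ (G.neighborSet v).ncard + 1 := by gcongr; exact ncard_image_le (toFinite _)
      _ < _ := by omega
  obtain ⟨x, hx⟩ := (ne_univ_iff_exists_notMem (insert c (β '' G.neighborSet v))).1
    fun h => hlt.ne (by rw [h])
  exact ⟨x, fun h => hx (by simp [h]), fun w hw h => hx (mem_insert_of_mem _ ⟨w, hw, h⟩)⟩

theorem exists_recolorSeries_of_isIndepSet [DecidableEq C] {β : V → C}
    (hβ : G.IsProperColoring β) (S : Finset C) :
    ∀ {η : V → C}, G.IsProperColoring η → G.IsIndepSet {v | β v ≠ η v} →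
      (∀ v, β v ≠ η v → η v ∈ S) →
      ∃ p : RelSeries (G.recolorStep C), p.head = β ∧ p.last = η ∧ p.length = S.card := by
  induction S using Finset.induction_on with
  | empty =>
    intro η _ _ hS
    refine ⟨RelSeries.singleton _ β, rfl, funext fun v => ?_, rfl⟩
    by_contra h
    exact Finset.notMem_empty _ (hS v h)
  | insert a S haS ih =>
    intro η hη hβη hS
    set η' : V → C := fun v => if η v = a then β v else η v with hη'
    have hη'_eq : ∀ v, η' v = β v ∨ η' v = η v := fun v => by
      by_cases h : η v = a <;> simp [hη', h]
    have hfirst : ∀ v, β v ≠ η' v → η v ≠ a ∧ η' v = η v := fun v hv => by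
      by_cases h : η v = a
      · simp [hη', h] at hv
      · exact ⟨h, if_neg h⟩
    have hsecond : ∀ v, η v ≠ η' v → η v = a ∧ β v ≠ η v := fun v hv => by
      by_cases h : η v = a
      · have : η' v = β v := if_pos h
        exact ⟨h, fun e => hv (by rw [this, e])⟩
      · exact absurd (if_neg h).symm hv
    obtain ⟨p, hp₀, hp₁, hplen⟩ := ih (hβ.of_forall_eq_or_eq hη hβη hη'_eq)
      (hβη.mono fun v hv => by
        show β v ≠ η v
        rw [← (hfirst v hv).2]
        exact hv)
      (fun v hv => by
        obtain ⟨ha, heq⟩ := hfirst v hv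
        rw [heq] at hv ⊢
        exact (Finset.mem_insert.1 (hS v hv)).resolve_left ha)
    have hstep : G.IsRecolorStep η' η :=
      ⟨hη, hβη.mono fun v hv => (hsecond v hv).2, a, fun v hv => (hsecond v hv).1⟩
    refine ⟨p.snoc η (by rw [hp₁]; exact hstep), by simp [hp₀], by simp, ?_⟩
    simp [hplen, haS]

lemma isRecolorStep_piecewise {B : Set V} [DecidablePred (· ∈ B)] (hB : G.IsIndepSet B)
    {α α' γ : V → C} {c : C}
    (hstep : (G.induce Bᶜ).spanningCoe.IsRecolorStep α α') (hc : ∀ x, α' x ≠ α x → α' x = c)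
    (hγ : G.IsProperColoring γ) (hγα : ∀ v ∉ B, γ v = α v) (hγc : ∀ v ∈ B, γ v ≠ c) :
    G.IsRecolorStep γ (B.piecewise γ α') := by
  have hchanged : ∀ v, B.piecewise γ α' v ≠ γ v → v ∉ B ∧ α' v ≠ α v := fun v hv => by
    by_cases h : v ∈ B
    · simp [h] at hv
    · simpa [h, hγα v h] using hv
  refine ⟨hB.isProperColoring fun u v huv hv => ?_, fun x hx y hy hxy hadj => ?_,
    c, fun x hx => ?_⟩
  · rw [piecewise_eq_of_notMem _ _ _ hv]
    by_cases hu : u ∈ B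
    · rw [piecewise_eq_of_mem _ _ _ hu]
      by_cases hαv : α' v = α v
      · rw [hαv, ← hγα v hv]
        exact hγ huv
      · rw [hc v hαv]
        exact hγc u hu
    · rw [piecewise_eq_of_notMem _ _ _ hu]
      exact hstep.proper (spanningCoe_induce_adj.2 ⟨huv, hu, hv⟩)
  · obtain ⟨hxB, hx'⟩ := hchanged x hx
    obtain ⟨hyB, hy'⟩ := hchanged y hy
    exact hstep.indepSet hx' hy' hxy (spanningCoe_induce_adj.2 ⟨hadj, hxB, hyB⟩)
  · obtain ⟨hxB, hx'⟩ := hchanged x hx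
    simpa [hxB] using hc x hx'

section Lift

variable [Finite V] [Fintype C] {d : ℕ} (hC : d + 2 ≤ Fintype.card C) {B : Set V}
  (hB : G.IsIndepSet B) (hdeg : ∀ v ∈ B, (G.neighborSet v).ncard ≤ d)
include hC hB hdeg

lemma exists_isProperColoring_ne_on {β : V → C} (hβ : G.IsProperColoring β) (c : C) :
    ∃ γ : V → C, G.IsProperColoring γ ∧ (∀ v ∉ B, γ v = β v) ∧ ∀ v ∈ B, γ v ≠ c := by
  classical
  have : Nonempty C := Fintype.card_pos_iff.1 (by omega)
  choose! g hgc hgβ using fun v (hv : v ∈ B) => exists_ne_forall_adj_ne hC β c (hdeg v hv)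
  refine ⟨B.piecewise g β, hB.isProperColoring fun u v huv hv => ?_,
    fun v hv => piecewise_eq_of_notMem _ _ _ hv, fun v hv => by simpa [hv] using hgc v hv⟩
  by_cases hu : u ∈ B
  · simpa [hu, hv] using (hgβ u hu v huv).symm
  · simpa [hu, hv] using hβ huv

theorem exists_recolorSeries_lift_step {α α' β : V → C}
    (hstep : (G.induce Bᶜ).spanningCoe.IsRecolorStep α α') (hβ : G.IsProperColoring β)
    (hβα : ∀ v ∉ B, β v = α v) :
    ∃ p : RelSeries (G.recolorStep C), p.head = β ∧ (∀ v ∉ B, p.last v = α' v) ∧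
      p.length = Fintype.card C := by
  classical
  obtain ⟨c, hc⟩ := hstep.mono
  -- first clear the colour `c` from `B`, which costs `|C| - 1` steps, then take the step off `B`
  obtain ⟨γ, hγ, hγβ, hγc⟩ := exists_isProperColoring_ne_on hC hB hdeg hβ c
  obtain ⟨p, hp₀, hp₁, hplen⟩ := exists_recolorSeries_of_isIndepSet hβ (Finset.univ.erase c) hγ
    (hB.mono fun v hv => by_contra fun h => hv (hγβ v h).symm)
    (fun v hv => Finset.mem_erase.2
      ⟨hγc v (by_contra fun h => hv (hγβ v h).symm), Finset.mem_univ _⟩)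
  have hstep' := isRecolorStep_piecewise hB hstep hc hγ (fun v hv => (hγβ v hv).trans (hβα v hv))
    hγc
  refine ⟨p.snoc _ (by rw [hp₁]; exact hstep'), by simp [hp₀], fun v hv => ?_, ?_⟩
  · rw [RelSeries.last_snoc]
    exact piecewise_eq_of_notMem _ _ _ hv
  · simp only [RelSeries.snoc_length, hplen, Finset.card_erase_of_mem (Finset.mem_univ c),
      Finset.card_univ]
    omega

theorem exists_recolorSeries_lift (p : RelSeries ((G.induce Bᶜ).spanningCoe.recolorStep C)) :
    ∀ {β : V → C}, G.IsProperColoring β → (∀ v ∉ B, β v = p.head v) →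
      ∃ q : RelSeries (G.recolorStep C), q.head = β ∧ (∀ v ∉ B, q.last v = p.last v) ∧
        q.length = Fintype.card C * p.length := by
  induction p using RelSeries.inductionOn' with
  | singleton α =>
    intro β _ hβα
    exact ⟨RelSeries.singleton _ β, rfl, by simpa using hβα, by simp⟩
  | snoc p α' hstep ih =>
    intro β hβ hβα
    obtain ⟨q, hq₀, hq₁, hqlen⟩ := ih hβ (by simpa using hβα)
    obtain ⟨r, hr₀, hr₁, hrlen⟩ := exists_recolorSeries_lift_step hC hB hdeg
      (mem_recolorStep.1 hstep) (isProperColoring_last_of_head (hq₀ ▸ hβ)) hq₁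
    refine ⟨q.smash r hr₀.symm, by simp [hq₀], by simpa using hr₁, ?_⟩
    simp [hqlen, hrlen, mul_add]

theorem exists_recolorSeries_of_induce_compl {σ η : V → C} (hσ : G.IsProperColoring σ)
    (hη : G.IsProperColoring η) (p : RelSeries ((G.induce Bᶜ).spanningCoe.recolorStep C))
    (hp₀ : p.head = σ) (hp₁ : ∀ v ∉ B, p.last v = η v) :
    ∃ q : RelSeries (G.recolorStep C), q.head = σ ∧ q.last = η ∧
      q.length = Fintype.card C * p.length + Fintype.card C := by
  classical
  obtain ⟨q, hq₀, hq₁, hqlen⟩ := exists_recolorSeries_lift hC hB hdeg p hσ (by simp [hp₀])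
  obtain ⟨r, hr₀, hr₁, hrlen⟩ := exists_recolorSeries_of_isIndepSet
    (isProperColoring_last_of_head (hq₀ ▸ hσ)) Finset.univ hη
    (hB.mono fun v hv => by_contra fun h => hv (by rw [hq₁ v h, hp₁ v h]))
    (fun _ _ => Finset.mem_univ _)
  exact ⟨q.smash r hr₀.symm, by simp [hq₀], by simp [hr₁], by simp [hqlen, hrlen]⟩

end Lift

theorem exists_recolorSeries_of_layering [Finite V] [Fintype C] {d t : ℕ}
    (hC : d + 2 ≤ Fintype.card C) (G : SimpleGraph V) (ℓ : V → ℕ) (hℓt : ∀ v, ℓ v < t)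
    (hℓ : ∀ ⦃u v⦄, G.Adj u v → ℓ u ≠ ℓ v) (hdeg : ∀ v, {w | G.Adj v w ∧ ℓ v < ℓ w}.ncard ≤ d)
    {σ η : V → C} (hσ : G.IsProperColoring σ) (hη : G.IsProperColoring η) :
    ∃ p : RelSeries (G.recolorStep C), p.head = σ ∧ p.last = η ∧
      p.length + Fintype.card C ≤ Fintype.card C ^ (t + 1) := by
  induction t generalizing G ℓ σ η with
  | zero =>
    refine ⟨RelSeries.singleton _ σ, rfl, funext fun v => absurd (hℓt v) (Nat.not_lt_zero _), ?_⟩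
    simp
  | succ t ih =>
    set B : Set V := {v | ℓ v = 0}
    set H := (G.induce Bᶜ).spanningCoe
    have hH : ∀ ⦃u v⦄, H.Adj u v → G.Adj u v ∧ ℓ u ≠ 0 ∧ ℓ v ≠ 0 := fun u v huv =>
      spanningCoe_induce_adj.1 huv
    have hB : G.IsIndepSet B := fun u hu v hv _ huv => hℓ huv (hu.trans hv.symm)
    have hdegB : ∀ v ∈ B, (G.neighborSet v).ncard ≤ d := fun v hv => by
      have hsub : G.neighborSet v ⊆ {w | G.Adj v w ∧ ℓ v < ℓ w} := fun w hw =>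
        ⟨hw, by have := hℓ hw; have hv : ℓ v = 0 := hv; omega⟩
      exact (ncard_le_ncard hsub (toFinite _)).trans (hdeg v)
    obtain ⟨p, hp₀, hp₁, hplen⟩ : ∃ p : RelSeries (H.recolorStep C), p.head = σ ∧
        (∀ v ∉ B, p.last v = η v) ∧ p.length + Fintype.card C ≤ Fintype.card C ^ (t + 1) := by
      rcases Nat.eq_zero_or_pos t with rfl | ht
      · exact ⟨RelSeries.singleton _ σ, rfl, fun v hv => absurd (Nat.lt_one_iff.1 (hℓt v)) hv,
          by simp⟩
      have hℓ' : ∀ ⦃u v⦄, H.Adj u v → ℓ u - 1 ≠ ℓ v - 1 := fun u v huv => by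
        have := hℓ (hH huv).1; have := hH huv; omega
      have hdeg' : ∀ v, {w | H.Adj v w ∧ ℓ v - 1 < ℓ w - 1}.ncard ≤ d := fun v => by
        have hsub : {w | H.Adj v w ∧ ℓ v - 1 < ℓ w - 1} ⊆ {w | G.Adj v w ∧ ℓ v < ℓ w} :=
          fun w ⟨hvw, hlt⟩ => ⟨(hH hvw).1, by have := (hH hvw).2; omega⟩
        exact (ncard_le_ncard hsub (toFinite _)).trans (hdeg v)
      obtain ⟨p, hp₀, hp₁, hplen⟩ := ih H (fun v => ℓ v - 1) (fun v => by have := hℓt v; omega)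
        hℓ' hdeg' (hσ.anti (spanningCoe_induce_le G Bᶜ)) (hη.anti (spanningCoe_induce_le G Bᶜ))
      exact ⟨p, hp₀, fun v _ => by rw [hp₁], hplen⟩
    obtain ⟨q, hq₀, hq₁, hqlen⟩ := exists_recolorSeries_of_induce_compl hC hB hdegB hσ hη p hp₀ hp₁
    refine ⟨q, hq₀, hq₁, ?_⟩
    have hk : 2 ≤ Fintype.card C := by omega
    calc q.length + Fintype.card C
        ≤ Fintype.card C * (p.length + Fintype.card C) := by rw [hqlen]; nlinarith
      _ ≤ Fintype.card C * Fintype.card C ^ (t + 1) := Nat.mul_le_mul_left _ hplen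
      _ = Fintype.card C ^ (t + 1 + 1) := by ring

end SimpleGraph

theorem stmt10_general {V : Type*} [Fintype V] (G : SimpleGraph V)
    (d t k : ℕ) (hk : d + 2 ≤ k)
    (e : Fin (Fintype.card V) ≃ V) (b : Fin (Fintype.card V) → ℕ)
    (hbmono : Monotone b) (hbt : ∀ i, b i < t)
    (hbind : ∀ i j, b i = b j → ¬ G.Adj (e i) (e j))
    (hdeg : ∀ i, Set.ncard {j : Fin (Fintype.card V) | G.Adj (e i) (e j) ∧ i < j} ≤ d)
    (σ η : V → Fin k)
    (hσ : ∀ u v : V, G.Adj u v → σ u ≠ σ v)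
    (hη : ∀ u v : V, G.Adj u v → η u ≠ η v) :
    ∃ (ℓ : ℕ) (cs : ℕ → V → Fin k),
      ℓ ≤ k ^ (t + 1) ∧
      cs 0 = σ ∧ cs ℓ = η ∧
      (∀ i : ℕ, i ≤ ℓ → ∀ u v : V, G.Adj u v → cs i u ≠ cs i v) ∧
      (∀ i : ℕ, i < ℓ → ∀ x y : V,
        cs (i + 1) x ≠ cs i x → cs (i + 1) y ≠ cs i y → ¬ G.Adj x y) := by
  have hlayer : ∀ ⦃u v⦄, G.Adj u v → b (e.symm u) ≠ b (e.symm v) := fun u v huv h =>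
    hbind _ _ h (by simpa using huv)
  have hlater : ∀ v, {w | G.Adj v w ∧ b (e.symm v) < b (e.symm w)}.ncard ≤ d := fun v => by
    rw [← ncard_image_of_injective _ e.symm.injective]
    refine (ncard_le_ncard ?_ (toFinite _)).trans (hdeg (e.symm v))
    rintro _ ⟨w, ⟨hvw, hlt⟩, rfl⟩
    exact ⟨by simpa using hvw, hbmono.reflect_lt hlt⟩
  have hσ' : G.IsProperColoring σ := fun _ _ h => hσ _ _ h
  have hη' : G.IsProperColoring η := fun _ _ h => hη _ _ h
  obtain ⟨p, hp₀, hp₁, hplen⟩ := SimpleGraph.exists_recolorSeries_of_layering (C := Fin k)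
    (by simpa using hk) G _ (fun v => hbt (e.symm v)) hlayer hlater hσ' hη'
  rw [Fintype.card_fin] at hplen
  let cs : ℕ → V → Fin k := fun i => p ⟨min i p.length, by omega⟩
  have hcs : ∀ i (hi : i ≤ p.length), cs i = p ⟨i, by omega⟩ := fun i hi => by
    simp [cs, min_eq_left hi]
  refine ⟨p.length, cs, by omega, ?_, ?_, fun i hi u v huv => ?_, fun i hi x y hx hy hxy => ?_⟩
  · rw [hcs 0 (Nat.zero_le _), ← hp₀]; rfl
  · rw [hcs _ le_rfl, ← hp₁]; rfl
  · rw [hcs i hi]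
    exact SimpleGraph.isProperColoring_apply_of_head (hp₀ ▸ hσ') _ huv
  · rw [hcs i hi.le, hcs (i + 1) hi] at hx hy
    exact (SimpleGraph.mem_recolorStep.1 (p.step ⟨i, hi⟩)).indepSet hx hy (G.ne_of_adj hxy) hxy

theorem stmt10 {V : Type*} [Fintype V] [DecidableEq V] (G : SimpleGraph V)
    [DecidableRel G.Adj] (d t k : ℕ) (hk : d + 2 ≤ k)
    (e : Fin (Fintype.card V) ≃ V) (b : Fin (Fintype.card V) → ℕ)
    (hbmono : Monotone b) (hbt : ∀ i, b i < t)
    (hbind : ∀ i j, b i = b j → ¬ G.Adj (e i) (e j))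
    (hdeg : ∀ i, Set.ncard {j : Fin (Fintype.card V) | G.Adj (e i) (e j) ∧ i < j} ≤ d)
    (σ η : V → Fin k)
    (hσ : ∀ u v : V, G.Adj u v → σ u ≠ σ v)
    (hη : ∀ u v : V, G.Adj u v → η u ≠ η v) :
    ∃ (ℓ : ℕ) (cs : ℕ → V → Fin k),
      ℓ ≤ k ^ (t + 1) ∧
      cs 0 = σ ∧ cs ℓ = η ∧
      (∀ i : ℕ, i ≤ ℓ → ∀ u v : V, G.Adj u v → cs i u ≠ cs i v) ∧
      (∀ i : ℕ, i < ℓ → ∀ x y : V,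
        cs (i + 1) x ≠ cs i x → cs (i + 1) y ≠ cs i y → ¬ G.Adj x y) :=
  stmt10_general G d t k hk e b hbmono hbt hbind hdeg σ η hσ hη
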